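/- Let G be a connected Lie group. Every affine vector field F on G can be written uniquely as a sum F = X + Z, where X is a linear vector field on G and Z is a left-invariant vector field on G. -/

import Mathlib

/-!
Let `Z` be the left-invariant field with `Z 1 = F 1` and `X := F - Z`. Left- and right-invariant
fields commute: in the chart at `x`, write the product `g x⁻¹ h` (for which `x` is a two-sided
unit) as a map `Q` on the chart. A left-invariant field is then `u ↦ ∂₂Q(u, p) (Z x)` and a
right-invariant one is `w ↦ ∂₁Q(p, w) (Y x)`, where `p` is the image of `x`. Their bracket at `p`
is `D²Q p ((0, Z x), (Y x, 0)) - D²Q p ((Y x, 0), (0, Z x))`, which vanishes because second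
derivatives are symmetric. Hence `[X, Y] = [F, Y]` for right-invariant `Y`, so `X` is linear.
Uniqueness holds because a left-invariant field is determined by its value at `1`, which has to be
`F 1` since the linear part vanishes there.
-/

open scoped Manifold
open Set Function

noncomputable section

variable {E : Type*} [NormedAddCommGroup E] [NormedSpace ℝ E]
  {H : Type*} [TopologicalSpace H] (I : ModelWithCorners ℝ E H)
  {M : Type*} [TopologicalSpace M] [ChartedSpace H M] [IsManifold I (⊤ : ℕ∞) M]

/-- The expression of a vector field in the preferred chart at `x`. -/
def chartVF (x : M) (V : ∀ y : M, TangentSpace I y) (v : E) : E :=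
  mfderiv I 𝓘(ℝ, E) (extChartAt I x) ((extChartAt I x).symm v) (V ((extChartAt I x).symm v))

/-- The Lie bracket of two vector fields on a manifold, computed in the preferred chart
at the point `x`. -/
def mbracket (V W : ∀ y : M, TangentSpace I y) (x : M) : TangentSpace I x :=
  mfderiv 𝓘(ℝ, E) I (extChartAt I x).symm (extChartAt I x x)
    (show E from VectorField.lieBracketWithin ℝ (chartVF I x V) (chartVF I x W) (Set.range I)
      (extChartAt I x x))

/-- A vector field is `C^k` if it is `C^k` as a section of the tangent bundle. -/
def CkVF (k : ℕ∞) (V : ∀ y : M, TangentSpace I y) : Prop :=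
  ContMDiff I I.tangent k (fun x => (⟨x, V x⟩ : TangentBundle I M))

/-- A vector field is smooth if it is smooth as a section of the tangent bundle. -/
def SmoothVF (V : ∀ y : M, TangentSpace I y) : Prop := CkVF I ⊤ V

/-- A vector field is complete if it admits a global integral curve through every point. -/
def IsCompleteVF (V : ∀ y : M, TangentSpace I y) : Prop :=
  ∀ x : M, ∃ γ : ℝ → M, γ 0 = x ∧ IsMIntegralCurve γ V

/-- `φ` is a global flow of the vector field `V`. -/
def IsFlowOf (φ : ℝ → M → M) (V : ∀ y : M, TangentSpace I y) : Prop :=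
  (∀ x, φ 0 x = x) ∧ (∀ s t x, φ (s + t) x = φ s (φ t x)) ∧
    ∀ x, IsMIntegralCurve (fun t => φ t x) V

section LieGroupDefs

variable {G : Type*} [TopologicalSpace G] [ChartedSpace H G] [Group G] [LieGroup I (⊤ : ℕ∞) G]

/-- A vector field on a Lie group is right invariant if it commutes with all right
translations. -/
def RightInvariant (Y : ∀ y : G, TangentSpace I y) : Prop :=
  ∀ x y : G, mfderiv I I (fun z => z * x) y (Y y) = Y (y * x)

/-- A vector field on a Lie group is left invariant if it commutes with all left
translations. -/
def LeftInvariant (Z : ∀ y : G, TangentSpace I y) : Prop :=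
  ∀ x y : G, mfderiv I I (fun z => x * z) y (Z y) = Z (x * y)

/-- A vector field `F` on a Lie group is affine if it is smooth and its Lie bracket with
any right invariant vector field is right invariant. -/
def IsAffineVF (F : ∀ y : G, TangentSpace I y) : Prop :=
  SmoothVF I F ∧ ∀ Y : ∀ y : G, TangentSpace I y,
    RightInvariant I Y → RightInvariant I (mbracket I F Y)

/-- A vector field on a Lie group is linear if it is affine and vanishes at the identity. -/
def IsLinearVF (F : ∀ y : G, TangentSpace I y) : Prop :=
  IsAffineVF I F ∧ F 1 = 0

end LieGroupDefs

section Calculus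

open Filter Topology VectorField

variable {𝕜 : Type*} [NontriviallyNormedField 𝕜]
  {E₁ E₂ F : Type*} [NormedAddCommGroup E₁] [NormedSpace 𝕜 E₁] [NormedAddCommGroup E₂]
  [NormedSpace 𝕜 E₂] [NormedAddCommGroup F] [NormedSpace 𝕜 F]

theorem DifferentiableWithinAt.fderivWithin_comp_prodMk_left {f : E₁ × E₂ → F} {s : Set E₁}
    {t : Set E₂} {x : E₁} {y : E₂} (hf : DifferentiableWithinAt 𝕜 f (s ×ˢ t) (x, y))
    (hy : y ∈ t) (hs : UniqueDiffWithinAt 𝕜 s x) (v : E₁) :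
    fderivWithin 𝕜 (fun u => f (u, y)) s x v = fderivWithin 𝕜 f (s ×ˢ t) (x, y) (v, 0) := by
  have h : HasFDerivWithinAt (fun u => f (u, y))
      ((fderivWithin 𝕜 f (s ×ˢ t) (x, y)).comp (.inl 𝕜 E₁ E₂)) s x :=
    hf.hasFDerivWithinAt.comp (t := s ×ˢ t) x (hasFDerivAt_prodMk_left x y).hasFDerivWithinAt
      fun u hu => ⟨hu, hy⟩
  rw [h.fderivWithin hs]
  rfl

theorem DifferentiableWithinAt.fderivWithin_comp_prodMk_right {f : E₁ × E₂ → F} {s : Set E₁}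
    {t : Set E₂} {x : E₁} {y : E₂} (hf : DifferentiableWithinAt 𝕜 f (s ×ˢ t) (x, y))
    (hx : x ∈ s) (ht : UniqueDiffWithinAt 𝕜 t y) (v : E₂) :
    fderivWithin 𝕜 (fun w => f (x, w)) t y v = fderivWithin 𝕜 f (s ×ˢ t) (x, y) (0, v) := by
  have h : HasFDerivWithinAt (fun w => f (x, w))
      ((fderivWithin 𝕜 f (s ×ˢ t) (x, y)).comp (.inr 𝕜 E₁ E₂)) t y :=
    hf.hasFDerivWithinAt.comp (t := s ×ˢ t) y (hasFDerivAt_prodMk_right x y).hasFDerivWithinAt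
      fun w hw => ⟨hx, hw⟩
  rw [h.fderivWithin ht]
  rfl

theorem VectorField.lieBracketWithin_sub_left {V V₁ W : F → F} {s : Set F} {x : F}
    (hV : DifferentiableWithinAt 𝕜 V s x) (hV₁ : DifferentiableWithinAt 𝕜 V₁ s x)
    (hs : UniqueDiffWithinAt 𝕜 s x) :
    lieBracketWithin 𝕜 (V - V₁) W s x =
      lieBracketWithin 𝕜 V W s x - lieBracketWithin 𝕜 V₁ W s x := by
  simp only [lieBracketWithin, Pi.sub_apply, map_sub]
  rw [fderivWithin_sub hs hV hV₁, sub_apply]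
  abel

theorem ContDiffWithinAt.eventually_differentiableWithinAt {f : E₁ → F} {s : Set E₁} {x : E₁}
    {n : WithTop ℕ∞} (hf : ContDiffWithinAt 𝕜 n f s x) (hn : 1 ≤ n) (hx : x ∈ s) :
    ∀ᶠ y in 𝓝[s] x, DifferentiableWithinAt 𝕜 f s y := by
  have h := (hf.of_le hn).eventually (by simp)
  rw [insert_eq_of_mem hx] at h
  exact h.mono fun y hy => hy.differentiableWithinAt one_ne_zero

theorem ContDiffWithinAt.fderivWithin_fderivWithin_comp_prodMk_right {f : E₁ × E₂ → F}
    {s : Set E₁} {t : Set E₂} {x : E₁} {y : E₂} (hf : ContDiffWithinAt 𝕜 2 f (s ×ˢ t) (x, y))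
    (hs : UniqueDiffOn 𝕜 s) (ht : UniqueDiffOn 𝕜 t) (hx : x ∈ s) (hy : y ∈ t) (a : E₂) (b : E₁) :
    fderivWithin 𝕜 (fun u => fderivWithin 𝕜 (fun w => f (u, w)) t y a) s x b =
      fderivWithin 𝕜 (fderivWithin 𝕜 f (s ×ˢ t)) (s ×ˢ t) (x, y) (b, 0) (0, a) := by
  have hxy : (x, y) ∈ s ×ˢ t := ⟨hx, hy⟩
  have hD : DifferentiableWithinAt 𝕜 (fderivWithin 𝕜 f (s ×ˢ t)) (s ×ˢ t) (x, y) :=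
    (hf.fderivWithin_right (m := 1) (hs.prod ht) le_rfl hxy).differentiableWithinAt one_ne_zero
  have hpartial : (fun u => fderivWithin 𝕜 (fun w => f (u, w)) t y a) =ᶠ[𝓝[s] x]
      fun u => fderivWithin 𝕜 f (s ×ˢ t) (u, y) (0, a) := by
    have hlim : Tendsto (fun u => (u, y)) (𝓝[s] x) (𝓝[s ×ˢ t] (x, y)) :=
      (continuous_id.prodMk continuous_const).continuousWithinAt.tendsto_nhdsWithin
        fun u hu => ⟨hu, hy⟩
    filter_upwards [hlim.eventually (hf.eventually_differentiableWithinAt one_le_two hxy),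
      self_mem_nhdsWithin] with u hu hus
    exact hu.fderivWithin_comp_prodMk_right hus (ht y hy) a
  rw [hpartial.fderivWithin_eq_of_mem hx,
    (hD.clm_apply (differentiableWithinAt_const _)).fderivWithin_comp_prodMk_left hy (hs x hx),
    fderivWithin_clm_apply ((hs.prod ht) _ hxy) hD (differentiableWithinAt_const _)]
  simp

theorem ContDiffWithinAt.fderivWithin_fderivWithin_comp_prodMk_left {f : E₁ × E₂ → F}
    {s : Set E₁} {t : Set E₂} {x : E₁} {y : E₂} (hf : ContDiffWithinAt 𝕜 2 f (s ×ˢ t) (x, y))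
    (hs : UniqueDiffOn 𝕜 s) (ht : UniqueDiffOn 𝕜 t) (hx : x ∈ s) (hy : y ∈ t) (a : E₂) (b : E₁) :
    fderivWithin 𝕜 (fun w => fderivWithin 𝕜 (fun u => f (u, w)) s x b) t y a =
      fderivWithin 𝕜 (fderivWithin 𝕜 f (s ×ˢ t)) (s ×ˢ t) (x, y) (0, a) (b, 0) := by
  have hxy : (x, y) ∈ s ×ˢ t := ⟨hx, hy⟩
  have hD : DifferentiableWithinAt 𝕜 (fderivWithin 𝕜 f (s ×ˢ t)) (s ×ˢ t) (x, y) :=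
    (hf.fderivWithin_right (m := 1) (hs.prod ht) le_rfl hxy).differentiableWithinAt one_ne_zero
  have hpartial : (fun w => fderivWithin 𝕜 (fun u => f (u, w)) s x b) =ᶠ[𝓝[t] y]
      fun w => fderivWithin 𝕜 f (s ×ˢ t) (x, w) (b, 0) := by
    have hlim : Tendsto (fun w => (x, w)) (𝓝[t] y) (𝓝[s ×ˢ t] (x, y)) :=
      (continuous_const.prodMk continuous_id).continuousWithinAt.tendsto_nhdsWithin
        fun w hw => ⟨hx, hw⟩
    filter_upwards [hlim.eventually (hf.eventually_differentiableWithinAt one_le_two hxy),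
      self_mem_nhdsWithin] with w hw hwt
    exact hw.fderivWithin_comp_prodMk_left hwt (hs x hx) b
  rw [hpartial.fderivWithin_eq_of_mem hy,
    (hD.clm_apply (differentiableWithinAt_const _)).fderivWithin_comp_prodMk_right hx (ht y hy),
    fderivWithin_clm_apply ((hs.prod ht) _ hxy) hD (differentiableWithinAt_const _)]
  simp

/-- If `p` is a two-sided unit of a local multiplication `Q`, the left-invariant extension of `a`
and the right-invariant extension of `b` commute at `p`. -/
theorem lieBracketWithin_fderivWithin_eq_zero_of_unit [IsRCLikeNormedField 𝕜] {Q : F × F → F}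
    {s : Set F} {p : F} (a b : F) (hs : UniqueDiffOn 𝕜 s) (hp : p ∈ s)
    (hp' : p ∈ closure (interior s)) (hQ : ContDiffWithinAt 𝕜 2 Q (s ×ˢ s) (p, p))
    (hl : ∀ᶠ w in 𝓝[s] p, Q (p, w) = w) (hr : ∀ᶠ u in 𝓝[s] p, Q (u, p) = u) :
    lieBracketWithin 𝕜 (fun u => fderivWithin 𝕜 (fun w => Q (u, w)) s p a)
      (fun w => fderivWithin 𝕜 (fun u => Q (u, w)) s p b) s p = 0 := by
  have hsymm : IsSymmSndFDerivWithinAt 𝕜 Q (s ×ˢ s) (p, p) :=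
    hQ.isSymmSndFDerivWithinAt (by simp) (hs.prod hs)
      (by rw [interior_prod_eq, closure_prod_eq]; exact ⟨hp', hp'⟩) ⟨hp, hp⟩
  have ha : fderivWithin 𝕜 (fun w => Q (p, w)) s p a = a := by
    rw [EventuallyEq.fderivWithin_eq_of_mem hl hp, fderivWithin_fun_id (hs p hp)]
    rfl
  have hb : fderivWithin 𝕜 (fun u => Q (u, p)) s p b = b := by
    rw [EventuallyEq.fderivWithin_eq_of_mem hr hp, fderivWithin_fun_id (hs p hp)]
    rfl
  rw [lieBracketWithin, ha, hb, hQ.fderivWithin_fderivWithin_comp_prodMk_left hs hs hp hp,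
    hQ.fderivWithin_fderivWithin_comp_prodMk_right hs hs hp hp, hsymm, sub_self]

end Calculus

section VectorFields

open VectorField

theorem chartVF_eq_trivializationAt (V : ∀ y : M, TangentSpace I y) (x : M) {v : E}
    (hv : v ∈ (extChartAt I x).target) :
    chartVF I x V v =
      (trivializationAt E (TangentSpace I) x
        ⟨(extChartAt I x).symm v, V ((extChartAt I x).symm v)⟩).2 := by
  have hy : (extChartAt I x).symm v ∈ (chartAt H x).source := by
    rw [← extChartAt_source I]
    exact (extChartAt I x).map_target hv
  rw [chartVF, (mdifferentiableAt_extChartAt hy).mfderiv]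
  rfl

theorem CkVF.contDiffWithinAt_chartVF {k : ℕ∞} {V : ∀ y : M, TangentSpace I y}
    (hV : CkVF I k V) (x : M) :
    ContDiffWithinAt ℝ k (chartVF I x V) (range I) (extChartAt I x x) := by
  have h := (contMDiffAt_iff.1 ((Bundle.contMDiffAt_section x).1 (hV x))).2
  simp only [extChartAt_model_space_eq_id, PartialEquiv.refl_coe] at h
  refine h.congr_of_eventuallyEq ?_ (chartVF_eq_trivializationAt I V x (mem_extChartAt_target x))
  filter_upwards [extChartAt_target_mem_nhdsWithin x] with v hv
  exact chartVF_eq_trivializationAt I V x hv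

theorem CkVF.sub {k : ℕ∞} {V W : ∀ y : M, TangentSpace I y}
    (hV : CkVF I k V) (hW : CkVF I k W) : CkVF I k (fun y => V y - W y) :=
  (ContMDiffSection.mk V hV - ContMDiffSection.mk W hW).contMDiff

theorem mbracket_sub_left {V W : ∀ y : M, TangentSpace I y} (hV : CkVF I 1 V) (hW : CkVF I 1 W)
    (U : ∀ y : M, TangentSpace I y) (x : M) :
    mbracket I (fun y => V y - W y) U x = mbracket I V U x - mbracket I W U x := by
  have hchart : chartVF I x (fun y => V y - W y) = chartVF I x V - chartVF I x W :=
    funext fun _ => map_sub _ _ _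
  have hud : UniqueDiffWithinAt ℝ (range I) (extChartAt I x x) :=
    I.uniqueDiffOn _ (extChartAt_target_subset_range x (mem_extChartAt_target x))
  simp only [mbracket, hchart, lieBracketWithin_sub_left
    ((hV.contDiffWithinAt_chartVF I x).differentiableWithinAt one_ne_zero)
    ((hW.contDiffWithinAt_chartVF I x).differentiableWithinAt one_ne_zero) hud]
  exact map_sub _ _ _

theorem mfderiv_extChartAt_mfderiv_apply {f : M → M} {x : M} (hf : MDifferentiableAt I I f x)
    (hfx : f x ∈ (extChartAt I x).source) (v : TangentSpace I x) :
    mfderiv I 𝓘(ℝ, E) (extChartAt I x) (f x) (mfderiv I I f x v) =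
      fderivWithin ℝ (extChartAt I x ∘ f ∘ (extChartAt I x).symm) (range I)
        (extChartAt I x x) v := by
  rw [extChartAt_source] at hfx
  have hc := mdifferentiableAt_extChartAt (I := I) hfx
  rw [← mfderiv_comp_apply x hc hf, (hc.comp x hf).mfderiv]
  rfl

end VectorFields

section LieGroup

open Filter Topology VectorField

variable {G : Type*} [TopologicalSpace G] [ChartedSpace H G] [Group G]

theorem mulInvariantVectorField_one (v : GroupLieAlgebra I G) :
    mulInvariantVectorField v (1 : G) = v := by
  have h : (fun z : G => 1 * z) = id := funext one_mul
  show mfderiv I I (fun z : G => 1 * z) 1 v = v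
  rw [h, mfderiv_id]
  rfl

theorem LeftInvariant.eq_mulInvariantVectorField {Z : ∀ g : G, TangentSpace I g}
    (hZ : LeftInvariant I Z) : Z = mulInvariantVectorField (Z 1) := by
  funext g
  have h := hZ g 1
  rw [mul_one] at h
  exact h.symm

/-- The product `(g, h) ↦ g * x⁻¹ * h`, for which `x` is a two-sided unit, read in the chart
at `x`. -/
def chartMul (x : G) (q : E × E) : E :=
  extChartAt I x ((extChartAt I x).symm q.1 * x⁻¹ * (extChartAt I x).symm q.2)

theorem chartMul_unit_left (x : G) :
    ∀ᶠ w in 𝓝[range I] extChartAt I x x, chartMul I x (extChartAt I x x, w) = w := by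
  filter_upwards [extChartAt_target_mem_nhdsWithin x] with w hw
  simp only [chartMul, extChartAt_to_inv, mul_inv_cancel, one_mul]
  exact (extChartAt I x).right_inv hw

theorem chartMul_unit_right (x : G) :
    ∀ᶠ u in 𝓝[range I] extChartAt I x x, chartMul I x (u, extChartAt I x x) = u := by
  filter_upwards [extChartAt_target_mem_nhdsWithin x] with u hu
  simp only [chartMul, extChartAt_to_inv, inv_mul_cancel_right]
  exact (extChartAt I x).right_inv hu

variable [LieGroup I (⊤ : ℕ∞) G]

theorem leftInvariant_mulInvariantVectorField (v : GroupLieAlgebra I G) :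
    LeftInvariant I (mulInvariantVectorField v : ∀ g : G, TangentSpace I g) := by
  intro x y
  have hcomp : (fun z => x * y * z) = (fun z => x * z) ∘ (fun z => y * z) :=
    funext fun z => mul_assoc x y z
  show _ = mfderiv I I (fun z => x * y * z) 1 v
  rw [hcomp]
  exact (mfderiv_comp_apply_of_eq 1 mdifferentiableAt_mul_left mdifferentiableAt_mul_left
    (mul_one y) v).symm

theorem smoothVF_mulInvariantVectorField (v : GroupLieAlgebra I G) :
    SmoothVF I (mulInvariantVectorField v : ∀ g : G, TangentSpace I g) := by
  have hmul : ContMDiff (I.prod I) I (⊤ : ℕ∞) fun p : G × G => p.1 * p.2 := contMDiff_mul I _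
  -- `g ↦ ⟨g, D(mul)_{(g, 1)} (0, v)⟩` is a composite of smooth maps.
  have hsec : ContMDiff I (I.prod I).tangent (⊤ : ℕ∞) fun g : G =>
      (equivTangentBundleProd I G I G).symm (⟨g, 0⟩, ⟨1, v⟩) :=
    contMDiff_equivTangentBundleProd_symm.comp
      ((Bundle.contMDiff_zeroSection _ _).prodMk contMDiff_const)
  unfold SmoothVF CkVF
  convert (hmul.contMDiff_tangentMap (m := (⊤ : ℕ∞)) (by simp)).comp hsec using 1
  funext g
  show (⟨g, mfderiv I I (g * ·) 1 v⟩ : TangentBundle I G) =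
    tangentMap (I.prod I) I (fun p : G × G => p.1 * p.2) ⟨(g, 1), (0, v)⟩
  rw [tangentMap, mfderiv_prod_eq_add_apply (hmul.mdifferentiableAt (by simp))]
  dsimp only
  congr 1
  · exact (mul_one g).symm
  · exact ((congrArg (· + _) (map_zero _)).trans (zero_add _)).symm

theorem LeftInvariant.smoothVF {Z : ∀ g : G, TangentSpace I g} (hZ : LeftInvariant I Z) :
    SmoothVF I Z :=
  hZ.eq_mulInvariantVectorField ▸ smoothVF_mulInvariantVectorField I (Z 1)

theorem contDiffWithinAt_chartMul (x : G) :
    ContDiffWithinAt ℝ (⊤ : ℕ∞) (chartMul I x) (range I ×ˢ range I)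
      (extChartAt I x x, extChartAt I x x) := by
  have hf : ContMDiffAt (I.prod I) I (⊤ : ℕ∞) (fun q : G × G => q.1 * x⁻¹ * q.2) (x, x) :=
    ((contMDiff_fst.mul contMDiff_const).mul contMDiff_snd).contMDiffAt
  have h := (contMDiffAt_iff.1 hf).2
  simp only [inv_mul_cancel_right, extChartAt_prod, ModelWithCorners.range_prod] at h
  exact h

theorem LeftInvariant.chartVF_eq {Z : ∀ g : G, TangentSpace I g} (hZ : LeftInvariant I Z)
    {x : G} {u : E} (hu : u ∈ (extChartAt I x).target) :
    chartVF I x Z u =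
      fderivWithin ℝ (fun w => chartMul I x (u, w)) (range I) (extChartAt I x x) (Z x) := by
  have h := mfderiv_extChartAt_mfderiv_apply I (f := ((extChartAt I x).symm u * x⁻¹ * ·))
    mdifferentiableAt_mul_left (by simpa using (extChartAt I x).map_target hu) (Z x)
  rw [hZ, inv_mul_cancel_right] at h
  exact h

theorem RightInvariant.chartVF_eq {Y : ∀ g : G, TangentSpace I g} (hY : RightInvariant I Y)
    {x : G} {u : E} (hu : u ∈ (extChartAt I x).target) :
    chartVF I x Y u =
      fderivWithin ℝ (fun w => chartMul I x (w, u)) (range I) (extChartAt I x x) (Y x) := by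
  have h := mfderiv_extChartAt_mfderiv_apply I (f := (· * (x⁻¹ * (extChartAt I x).symm u)))
    mdifferentiableAt_mul_right (by simpa using (extChartAt I x).map_target hu) (Y x)
  rw [hY, mul_inv_cancel_left] at h
  refine h.trans ?_
  simp only [chartMul, Function.comp_def, mul_assoc]
  rfl

theorem mbracket_eq_zero_of_leftInvariant_of_rightInvariant {Z Y : ∀ g : G, TangentSpace I g}
    (hZ : LeftInvariant I Z) (hY : RightInvariant I Y) (x : G) : mbracket I Z Y x = 0 := by
  have htarget := extChartAt_target_mem_nhdsWithin (I := I) x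
  have hp := extChartAt_target_subset_range x (mem_extChartAt_target (I := I) x)
  have hZ' : chartVF I x Z =ᶠ[𝓝[range I] extChartAt I x x] fun u =>
      fderivWithin ℝ (fun w => chartMul I x (u, w)) (range I) (extChartAt I x x) (Z x) := by
    filter_upwards [htarget] with u hu using hZ.chartVF_eq I hu
  have hY' : chartVF I x Y =ᶠ[𝓝[range I] extChartAt I x x] fun w =>
      fderivWithin ℝ (fun u => chartMul I x (u, w)) (range I) (extChartAt I x x) (Y x) := by
    filter_upwards [htarget] with w hw using hY.chartVF_eq I hw
  have h : lieBracketWithin ℝ (chartVF I x Z) (chartVF I x Y) (range I)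
      (extChartAt I x x) = 0 := by
    rw [hZ'.lieBracketWithin_vectorField_eq_of_mem hY' hp]
    exact lieBracketWithin_fderivWithin_eq_zero_of_unit (F := E) (Z x) (Y x) I.uniqueDiffOn hp
      (I.range_subset_closure_interior hp)
      ((contDiffWithinAt_chartMul I x).of_le (WithTop.coe_le_coe.2 le_top))
      (chartMul_unit_left I x) (chartMul_unit_right I x)
  rw [mbracket, h]
  exact map_zero _

theorem IsAffineVF.sub_leftInvariant {F Z : ∀ g : G, TangentSpace I g} (hF : IsAffineVF I F)
    (hZ : LeftInvariant I Z) : IsAffineVF I (fun g => F g - Z g) := by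
  refine ⟨hF.1.sub I hZ.smoothVF, fun Y hY => ?_⟩
  have h : mbracket I (fun g => F g - Z g) Y = mbracket I F Y := by
    funext x
    rw [mbracket_sub_left I (hF.1.of_le (WithTop.coe_le_coe.2 le_top))
      (hZ.smoothVF.of_le (WithTop.coe_le_coe.2 le_top)),
      mbracket_eq_zero_of_leftInvariant_of_rightInvariant I hZ hY, sub_zero]
  exact h ▸ hF.2 Y hY

theorem affine_unique_decomposition
    (F : ∀ y : G, TangentSpace I y) (hF : IsAffineVF I F) :
    ∃! p : (∀ y : G, TangentSpace I y) × (∀ y : G, TangentSpace I y),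
      IsLinearVF I p.1 ∧ LeftInvariant I p.2 ∧ F = fun x => p.1 x + p.2 x := by
  set Z : ∀ g : G, TangentSpace I g := mulInvariantVectorField (F 1)
  have hZ : LeftInvariant I Z := leftInvariant_mulInvariantVectorField I (F 1)
  refine ⟨(fun g => F g - Z g, Z), ⟨⟨hF.sub_leftInvariant I hZ, ?_⟩, hZ, ?_⟩, ?_⟩
  · simp [Z, mulInvariantVectorField_one]
  · simp
  · rintro ⟨X', Z'⟩ ⟨hX', hZ', hsum⟩
    dsimp only at hX' hZ' hsum
    have hZ'1 : Z' 1 = F 1 := by simp [hsum, hX'.2]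
    have hZ'eq : Z' = Z := by rw [hZ'.eq_mulInvariantVectorField, hZ'1]
    exact Prod.ext (funext fun g => by simp [hsum, hZ'eq]) hZ'eq

end LieGroup
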